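/- Let I ⊆ {1,…,n} be an arbitrary subset of modified vertices and J = S \ {s_i : i ∈ I}. The Modified Kostant Game with active set I terminates in a unique final configuration c_final, and the total number of chips in this final configuration satisfies |c_final| = Σ_{γ^∨ ∈ (Φ^∨)^+ \ (Φ_J^∨)^+} ht_I(γ^∨), where the sum is over all positive coroots of Φ that do not lie in the coroot subsystem generated by {α_j^∨ : s_j ∈ J}. -/

import Mathlib

open scoped Classical RealInnerProductSpace

noncomputable section

variable {n d : ℕ}

/-- The pairing `⟨β, γ^∨⟩ = 2(β,γ)/(γ,γ)` of a vector with a coroot. -/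
def rsPair (β γ : EuclideanSpace ℝ (Fin d)) : ℝ := 2 * ⟪β, γ⟫ / ⟪γ, γ⟫

/-- The coroot `γ^∨ = 2γ/(γ,γ)`. -/
def rsCoroot (γ : EuclideanSpace ℝ (Fin d)) : EuclideanSpace ℝ (Fin d) :=
  (2 / ⟪γ, γ⟫) • γ

/-- `⟨·, γ^∨⟩` as a linear functional. -/
def corootForm (γ : EuclideanSpace ℝ (Fin d)) : EuclideanSpace ℝ (Fin d) →ₗ[ℝ] ℝ where
  toFun x := 2 * ⟪x, γ⟫ / ⟪γ, γ⟫
  map_add' x y := by simp only [inner_add_left]; ring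
  map_smul' c x := by simp only [real_inner_smul_left, RingHom.id_apply, smul_eq_mul]; ring

/-- A finite reduced crystallographic root system in the Euclidean space `ℝ^d`, together with a
chosen base of simple roots `α 0, …, α (n-1)`: every root is an integral linear combination of
the simple roots with all coefficients nonnegative or all nonpositive. -/
structure RootSystemBase (n d : ℕ) : Type where
  Φ : Finset (EuclideanSpace ℝ (Fin d))
  α : Fin n → EuclideanSpace ℝ (Fin d)
  α_mem : ∀ i, α i ∈ Φ
  nonzero : ∀ β ∈ Φ, β ≠ 0
  reduced : ∀ β ∈ Φ, ∀ t : ℝ, t • β ∈ Φ → t = 1 ∨ t = -1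
  crystallographic : ∀ β ∈ Φ, ∀ γ ∈ Φ, ∃ k : ℤ, rsPair β γ = (k : ℝ)
  reflClosed : ∀ β ∈ Φ, ∀ γ ∈ Φ, β - rsPair β γ • γ ∈ Φ
  indep : LinearIndependent ℝ α
  base : ∀ β ∈ Φ, ∃ c : Fin n → ℤ,
    β = ∑ i, (c i : ℝ) • α i ∧ ((∀ i, 0 ≤ c i) ∨ (∀ i, c i ≤ 0))

/-- The extended space `E' = E ⊕ ℝ^I`. -/
abbrev ExtSp (n d : ℕ) (I : Finset (Fin n)) : Type :=
  EuclideanSpace ℝ (Fin d) × ({p : Fin n // p ∈ I} → ℝ)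

/-- The total source vector `β = ∑_{p ∈ I} β_p` in the extended space. -/
def betaVec (n d : ℕ) (I : Finset (Fin n)) : ExtSp n d I := (0, fun _ => 1)

namespace RootSystemBase

variable (R : RootSystemBase n d)

lemma alpha_ne_zero (i : Fin n) : R.α i ≠ 0 := R.nonzero _ (R.α_mem i)

lemma inner_alpha_ne_zero (i : Fin n) : ⟪R.α i, R.α i⟫ ≠ 0 := fun h =>
  R.alpha_ne_zero i ((inner_self_eq_zero (𝕜 := ℝ)).mp h)

lemma corootForm_alpha_self (i : Fin n) : corootForm (R.α i) (R.α i) = 2 := by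
  have h2 := R.inner_alpha_ne_zero i
  show 2 * ⟪R.α i, R.α i⟫ / ⟪R.α i, R.α i⟫ = 2
  rw [mul_div_assoc, div_self h2, mul_one]

/-- The simple reflection `s_i : x ↦ x - ⟨x, α_i^∨⟩ α_i` as a linear automorphism of `E`. -/
def sRefl (i : Fin n) :
    EuclideanSpace ℝ (Fin d) ≃ₗ[ℝ] EuclideanSpace ℝ (Fin d) :=
  Module.reflection (R.corootForm_alpha_self i)

/-- The Weyl group `W`, as the subgroup of linear automorphisms of `E` generated by the
simple reflections. -/
def weyl : Subgroup (EuclideanSpace ℝ (Fin d) ≃ₗ[ℝ] EuclideanSpace ℝ (Fin d)) :=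
  Subgroup.closure (Set.range R.sRefl)

/-- `wordProd [i₁, …, i_t] = s_{i₁} ⋯ s_{i_t}`. -/
def wordProd (l : List (Fin n)) :
    EuclideanSpace ℝ (Fin d) ≃ₗ[ℝ] EuclideanSpace ℝ (Fin d) :=
  (l.map R.sRefl).prod

/-- The Weyl group element `s_{i_t} ⋯ s_{i_1}` associated to the firing sequence
`(i_1, …, i_t)`. -/
def seqProd (l : List (Fin n)) :
    EuclideanSpace ℝ (Fin d) ≃ₗ[ℝ] EuclideanSpace ℝ (Fin d) :=
  (l.reverse.map R.sRefl).prod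

/-- The length function `ℓ` of the Coxeter system `(W, S)`: the minimal number of simple
reflections needed to express `w`. -/
def len (w : EuclideanSpace ℝ (Fin d) ≃ₗ[ℝ] EuclideanSpace ℝ (Fin d)) : ℕ :=
  sInf {t | ∃ l : List (Fin n), l.length = t ∧ R.wordProd l = w}

/-- The set `W^J` of minimal length representatives of `W/W_J`, for `J = S \ {s_i : i ∈ I}`:
those `w ∈ W` with `ℓ(w s_j) > ℓ(w)` for all `j ∉ I`. -/
def minReps (I : Finset (Fin n)) :
    Set (EuclideanSpace ℝ (Fin d) ≃ₗ[ℝ] EuclideanSpace ℝ (Fin d)) :=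
  {w | w ∈ R.weyl ∧ ∀ j, j ∉ I → R.len w < R.len (w * R.sRefl j)}

/-- The Cartan matrix `a_{uv} = ⟨α_u, α_v^∨⟩` (an integer by crystallinity). -/
def cartan (u v : Fin n) : ℤ := ⌊rsPair (R.α u) (R.α v)⌋

/-- The set `Φ⁺` of positive roots. -/
def posRoots : Finset (EuclideanSpace ℝ (Fin d)) :=
  R.Φ.filter fun β => ∃ c : Fin n → ℤ, β = ∑ i, (c i : ℝ) • R.α i ∧ ∀ i, 0 ≤ c i

/-- The set `Φ_P⁺` of positive roots lying in the span of the simple roots `α_j`, `j ∈ P`. -/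
def parPos (P : Finset (Fin n)) : Finset (EuclideanSpace ℝ (Fin d)) :=
  R.posRoots.filter fun β => β ∈ Submodule.span ℝ (R.α '' (P : Set (Fin n)))

/-- `∑_{u ≠ v} (−a_{uv}) c_u + [v ∈ I]`. -/
def chipBound (I : Finset (Fin n)) (c : Fin n → ℤ) (v : Fin n) : ℤ :=
  (∑ u ∈ Finset.univ.erase v, -(R.cartan u v) * c u) + (if v ∈ I then 1 else 0)

/-- Vertex `v` is sad in the configuration `c` (Modified Kostant Game with active set `I`). -/
def Sad (I : Finset (Fin n)) (c : Fin n → ℤ) (v : Fin n) : Prop :=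
  2 * c v < R.chipBound I c v

/-- Firing vertex `v`. -/
def fire (I : Finset (Fin n)) (c : Fin n → ℤ) (v : Fin n) : Fin n → ℤ :=
  Function.update c v (R.chipBound I c v - c v)

end RootSystemBase

/-- `ValidFrom R I c l`: starting from the configuration `c`, the sequence `l` fires a sad
vertex at each step. -/
def RootSystemBase.ValidFrom (R : RootSystemBase n d) (I : Finset (Fin n)) :
    (Fin n → ℤ) → List (Fin n) → Prop
  | _, [] => True
  | c, v :: l => R.Sad I c v ∧ RootSystemBase.ValidFrom R I (R.fire I c v) l

namespace RootSystemBase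

variable (R : RootSystemBase n d)

/-- A valid firing sequence: starts at the zero configuration and fires a sad vertex at
each step. -/
def Valid (I : Finset (Fin n)) (l : List (Fin n)) : Prop := R.ValidFrom I 0 l

/-- The configuration reached after playing the sequence `l` from the zero configuration. -/
def play (I : Finset (Fin n)) (l : List (Fin n)) : Fin n → ℤ :=
  l.foldl (R.fire I) 0

/-- A maximal valid firing sequence: no vertex is sad in the final configuration. -/
def MaximalSeq (I : Finset (Fin n)) (l : List (Fin n)) : Prop :=
  R.Valid I l ∧ ∀ v, ¬ R.Sad I (R.play I l) v

/-- The (integer) coefficients of a vector in the basis of simple coroots, when they exist. -/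
def corootCoeffs (x : EuclideanSpace ℝ (Fin d)) : Fin n → ℤ :=
  if h : ∃ k : Fin n → ℤ, x = ∑ j, (k j : ℝ) • rsCoroot (R.α j) then h.choose else 0

/-- The `I`-height of a (co)vector: the sum over `j ∈ I` of its coefficients in the basis
of simple coroots. -/
def htI (I : Finset (Fin n)) (x : EuclideanSpace ℝ (Fin d)) : ℤ :=
  ∑ j ∈ I, R.corootCoeffs x j

end RootSystemBase

/-- The extended pairing `⟨·, α_i^∨⟩` on `E' = E ⊕ ℝ^I`, determined by
`⟨β_p, α_i^∨⟩ = −δ_{pi}`, as a linear functional. -/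
def extForm (R : RootSystemBase n d) (I : Finset (Fin n)) (i : Fin n) :
    ExtSp n d I →ₗ[ℝ] ℝ :=
  (corootForm (R.α i)).comp (LinearMap.fst ℝ _ _) -
    (if h : i ∈ I then
      (LinearMap.proj (R := ℝ) (φ := fun _ : {p : Fin n // p ∈ I} => ℝ) ⟨i, h⟩).comp
        (LinearMap.snd ℝ _ _)
    else 0)

namespace RootSystemBase

variable (R : RootSystemBase n d)

lemma extForm_apply (I : Finset (Fin n)) (i : Fin n) (x : ExtSp n d I) :
    extForm R I i x = corootForm (R.α i) x.1 - (if h : i ∈ I then x.2 ⟨i, h⟩ else 0) := by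
  by_cases h : i ∈ I <;> simp [extForm, h]

lemma extForm_alpha (I : Finset (Fin n)) (i : Fin n) :
    extForm R I i ((R.α i, 0) : ExtSp n d I) = 2 := by
  rw [R.extForm_apply]
  simp [R.corootForm_alpha_self i]

/-- The simple reflection `s_i : x ↦ x − ⟨x, α_i^∨⟩ α_i` on the extended space `E'`. -/
def extRefl (I : Finset (Fin n)) (i : Fin n) : ExtSp n d I ≃ₗ[ℝ] ExtSp n d I :=
  Module.reflection (R.extForm_alpha I i)

/-- The extended pairing `⟨x, α_i^∨⟩` for `x ∈ E'`. -/
def extPair (I : Finset (Fin n)) (x : ExtSp n d I) (i : Fin n) : ℝ := extForm R I i x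

/-- The action of `s_{i_t} ⋯ s_{i_1}` on the extended space `E'`. -/
def extSeqProd (I : Finset (Fin n)) (l : List (Fin n)) : ExtSp n d I ≃ₗ[ℝ] ExtSp n d I :=
  (l.reverse.map (R.extRefl I)).prod

end RootSystemBase

/-!
Let `λ = ∑_{i ∈ I} ω_i`. Reading a configuration `c` as the weight `λ - ∑ c_u α_u`, after a
valid sequence with Weyl group element `w = s_{i_t} ⋯ s_{i_1}` that weight is `w λ`; a vertex `v`
is sad exactly when `⟨w λ, α_v^∨⟩ > 0`, and firing it replaces `w` by `s_v w`, which adds the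
single inversion `γ = w⁻¹ α_v`, worth `⟨λ, γ^∨⟩ > 0` chips. So a game has at most `|Φ⁺|` moves.
When no vertex is sad, `w λ` is antidominant, which forces the inversion set of `w` to be
`{γ ∈ Φ⁺ | ⟨λ, γ^∨⟩ > 0}`. An element of `W` is determined by its inversion set, so the final
configuration is unique, and it holds `∑_{γ ∈ Φ⁺} ⟨λ, γ^∨⟩` chips; here `⟨λ, γ^∨⟩ = ht_I(γ^∨)`,
which vanishes when `γ^∨` lies in the span of the `α_j^∨`, `j ∉ I`. The coefficients of `γ^∨` are
integers because `γ` is `W`-conjugate to a simple root.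
-/

local notation "E" => EuclideanSpace ℝ (Fin d)

lemma rsPair_eq_mul_inner (x γ : E) : rsPair x γ = 2 / ⟪γ, γ⟫ * ⟪x, γ⟫ := by
  rw [rsPair]; ring

lemma rsPair_eq_inner_rsCoroot (x γ : E) : rsPair x γ = ⟪x, rsCoroot γ⟫ := by
  rw [rsCoroot, real_inner_smul_right, rsPair_eq_mul_inner]

lemma rsPair_neg_left (x γ : E) : rsPair (-x) γ = -rsPair x γ := by
  simp only [rsPair_eq_mul_inner, inner_neg_left, mul_neg]

lemma rsPair_neg_right (x γ : E) : rsPair x (-γ) = -rsPair x γ := by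
  simp only [rsPair_eq_mul_inner, inner_neg_left, inner_neg_right, neg_neg, mul_neg]

namespace RootSystemBase

variable (R : RootSystemBase n d)

lemma inner_self_pos {β : E} (hβ : β ∈ R.Φ) : 0 < ⟪β, β⟫ :=
  real_inner_self_pos.2 (R.nonzero β hβ)

lemma rsPair_self {β : E} (hβ : β ∈ R.Φ) : rsPair β β = 2 := by
  rw [rsPair, mul_div_assoc, div_self (R.inner_self_pos hβ).ne', mul_one]

lemma rsPair_nonneg_iff {β : E} (hβ : β ∈ R.Φ) (x : E) : 0 ≤ rsPair x β ↔ 0 ≤ ⟪x, β⟫ := by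
  rw [rsPair_eq_mul_inner, mul_nonneg_iff_of_pos_left (div_pos two_pos (R.inner_self_pos hβ))]

lemma rsPair_pos_iff {β : E} (hβ : β ∈ R.Φ) (x : E) : 0 < rsPair x β ↔ 0 < ⟪x, β⟫ := by
  rw [rsPair_eq_mul_inner, mul_pos_iff_of_pos_left (div_pos two_pos (R.inner_self_pos hβ))]

lemma neg_mem {β : E} (hβ : β ∈ R.Φ) : -β ∈ R.Φ := by
  simpa [R.rsPair_self hβ, two_smul] using R.reflClosed β hβ β hβ

lemma sRefl_apply (i : Fin n) (x : E) : R.sRefl i x = x - rsPair x (R.α i) • R.α i := by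
  rw [sRefl, Module.reflection_apply]; rfl

lemma sRefl_alpha (i : Fin n) : R.sRefl i (R.α i) = -R.α i := by
  rw [R.sRefl_apply, R.rsPair_self (R.α_mem i), two_smul, sub_add_cancel_left]

lemma sRefl_mul_self (i : Fin n) : R.sRefl i * R.sRefl i = 1 :=
  LinearEquiv.ext (Module.involutive_reflection (R.corootForm_alpha_self i))

lemma sRefl_mem {β : E} (hβ : β ∈ R.Φ) (i : Fin n) : R.sRefl i β ∈ R.Φ := by
  rw [R.sRefl_apply]; exact R.reflClosed β hβ (R.α i) (R.α_mem i)

lemma inner_sRefl_sRefl (i : Fin n) (x y : E) : ⟪R.sRefl i x, R.sRefl i y⟫ = ⟪x, y⟫ := by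
  have h := (R.inner_self_pos (R.α_mem i)).ne'
  simp only [R.sRefl_apply, inner_sub_left, inner_sub_right, real_inner_smul_left,
    real_inner_smul_right, rsPair, real_inner_comm (R.α i)]
  field_simp
  ring

lemma coeffs_unique {c c' : Fin n → ℝ} (h : ∑ i, c i • R.α i = ∑ i, c' i • R.α i) : c = c' :=
  funext (Fintype.linearIndependent_iffₛ.1 R.indep c c' h)

lemma alpha_mem_posRoots (i : Fin n) : R.α i ∈ R.posRoots :=
  Finset.mem_filter.2 ⟨R.α_mem i, Pi.single i 1, by simp [Pi.single_apply],
    fun j => by rw [Pi.single_apply]; split_ifs <;> norm_num⟩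

lemma mem_Φ_of_mem_posRoots {β : E} (hβ : β ∈ R.posRoots) : β ∈ R.Φ :=
  (Finset.mem_filter.1 hβ).1

lemma mem_posRoots_of_coeff_pos {β : E} (hβ : β ∈ R.Φ) {t : Fin n → ℝ}
    (ht : β = ∑ i, t i • R.α i) {j : Fin n} (hj : 0 < t j) : β ∈ R.posRoots := by
  obtain ⟨c, hc, hc_nonneg | hc_nonpos⟩ := R.base β hβ
  · exact Finset.mem_filter.2 ⟨hβ, c, hc, hc_nonneg⟩
  · have hct : (fun i => (c i : ℝ)) = t := R.coeffs_unique (hc ▸ ht)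
    have hcj : (c j : ℝ) ≤ 0 := by exact_mod_cast hc_nonpos j
    linarith [congrFun hct j]

lemma exists_inner_alpha_eq (b : Fin n → ℝ) : ∃ x : E, ∀ j, ⟪R.α j, x⟫ = b j := by
  let B := Module.Basis.span R.indep
  let f := LinearMap.toContinuousLinearMap (B.constr ℝ b)
  refine ⟨((InnerProductSpace.toDual ℝ (Submodule.span ℝ (Set.range R.α))).symm f : E), fun j => ?_⟩
  have h : R.α j = (B j : E) := by simp [B, Module.Basis.span_apply]
  rw [real_inner_comm, h, ← Submodule.coe_inner, InnerProductSpace.toDual_symm_apply]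
  simp [f]

/-- `⟪β, ρ⟫` is the height of `β`: the sum of its coefficients in the simple roots. -/
lemma one_le_inner_of_mem_posRoots {ρ : E} (hρ : ∀ i, ⟪R.α i, ρ⟫ = 1) {β : E}
    (hβ : β ∈ R.posRoots) : 1 ≤ ⟪β, ρ⟫ := by
  obtain ⟨hβΦ, c, rfl, hc⟩ := Finset.mem_filter.1 hβ
  obtain ⟨j, hj⟩ : ∃ j, c j ≠ 0 := by
    by_contra! h
    exact R.nonzero _ hβΦ (by simp [h])
  have hsum : ⟪∑ i, (c i : ℝ) • R.α i, ρ⟫ = ((∑ i, c i : ℤ) : ℝ) := by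
    simp [sum_inner, real_inner_smul_left, hρ]
  have : 1 ≤ ∑ i, c i := (lt_of_le_of_ne (hc j) hj.symm).trans_le
    (Finset.single_le_sum (fun i _ => hc i) (Finset.mem_univ j))
  rw [hsum]
  exact_mod_cast this

lemma neg_mem_posRoots_iff {β : E} (hβ : β ∈ R.Φ) : -β ∈ R.posRoots ↔ β ∉ R.posRoots := by
  constructor
  · intro hneg hpos
    obtain ⟨ρ, hρ⟩ := R.exists_inner_alpha_eq 1
    have h1 := R.one_le_inner_of_mem_posRoots hρ hpos
    have h2 := R.one_le_inner_of_mem_posRoots hρ hneg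
    rw [inner_neg_left] at h2
    linarith
  · intro hnot
    obtain ⟨c, hc, hc_nonneg | hc_nonpos⟩ := R.base β hβ
    · exact absurd (Finset.mem_filter.2 ⟨hβ, c, hc, hc_nonneg⟩) hnot
    · refine Finset.mem_filter.2 ⟨R.neg_mem hβ, -c, ?_, fun i => by simpa using hc_nonpos i⟩
      simp [hc, ← Finset.sum_neg_distrib]

lemma sRefl_mem_posRoots {γ : E} (hγ : γ ∈ R.posRoots) {i : Fin n} (hne : γ ≠ R.α i) :
    R.sRefl i γ ∈ R.posRoots := by
  obtain ⟨hγΦ, c, rfl, hc⟩ := Finset.mem_filter.1 hγ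
  -- `γ` is not a multiple of `α i` (the system is reduced), so it has another positive coefficient
  obtain ⟨j, hji, hj⟩ : ∃ j, j ≠ i ∧ 0 < c j := by
    by_contra! h
    have hγi : ∑ k, (c k : ℝ) • R.α k = (c i : ℝ) • R.α i :=
      Fintype.sum_eq_single i fun k hk => by simp [le_antisymm (h k hk) (hc k)]
    rw [hγi] at hγΦ hne
    rcases R.reduced _ (R.α_mem i) _ hγΦ with h1 | h1
    · exact hne (by rw [h1, one_smul])
    · have : (0 : ℝ) ≤ c i := by exact_mod_cast hc i
      linarith
  refine R.mem_posRoots_of_coeff_pos (R.sRefl_mem hγΦ i)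
    (t := fun k => c k - (Pi.single i (rsPair (∑ k, (c k : ℝ) • R.α k) (R.α i)) : Fin n → ℝ) k)
    ?_ (j := j) (by simpa [hji] using hj)
  simp [R.sRefl_apply, sub_smul, Finset.sum_sub_distrib, Pi.single_apply, ite_smul]

lemma sRefl_mem_posRoots_iff {β : E} (hβ : β ∈ R.Φ) {i : Fin n} (h₁ : β ≠ R.α i)
    (h₂ : β ≠ -R.α i) : R.sRefl i β ∈ R.posRoots ↔ β ∈ R.posRoots := by
  refine ⟨fun h => ?_, fun h => R.sRefl_mem_posRoots h h₁⟩
  by_contra hβ'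
  have hneg := R.sRefl_mem_posRoots ((R.neg_mem_posRoots_iff hβ).2 hβ') (i := i)
    (by rwa [ne_eq, neg_eq_iff_eq_neg])
  rw [map_neg, R.neg_mem_posRoots_iff (R.sRefl_mem hβ i)] at hneg
  exact hneg h

@[simp] lemma wordProd_nil : R.wordProd [] = 1 := rfl

lemma wordProd_cons (i : Fin n) (l : List (Fin n)) :
    R.wordProd (i :: l) = R.sRefl i * R.wordProd l := by
  rw [wordProd, List.map_cons, List.prod_cons, wordProd]

lemma wordProd_append (l₁ l₂ : List (Fin n)) :
    R.wordProd (l₁ ++ l₂) = R.wordProd l₁ * R.wordProd l₂ := by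
  rw [wordProd, List.map_append, List.prod_append, wordProd, wordProd]

lemma wordProd_singleton (i : Fin n) : R.wordProd [i] = R.sRefl i := by
  rw [wordProd_cons, wordProd_nil, mul_one]

lemma wordProd_inv (l : List (Fin n)) : (R.wordProd l)⁻¹ = R.wordProd l.reverse := by
  rw [wordProd, List.prod_inv_reverse, List.map_map, wordProd, List.map_reverse]
  rfl

lemma seqProd_wordProd_apply (l : List (Fin n)) (x : E) : R.seqProd l (R.wordProd l x) = x := by
  rw [seqProd, ← wordProd, ← R.wordProd_inv]
  exact (R.wordProd l).symm_apply_apply x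

@[simp] lemma seqProd_nil : R.seqProd [] = 1 := rfl

lemma seqProd_eq_wordProd (l : List (Fin n)) : R.seqProd l = R.wordProd l.reverse := rfl

lemma seqProd_append_singleton (l : List (Fin n)) (v : Fin n) :
    R.seqProd (l ++ [v]) = R.sRefl v * R.seqProd l := by
  rw [seqProd_eq_wordProd, List.reverse_append, List.reverse_singleton, List.singleton_append,
    wordProd_cons, seqProd_eq_wordProd]

lemma wordProd_mem {β : E} (hβ : β ∈ R.Φ) (l : List (Fin n)) : R.wordProd l β ∈ R.Φ := by
  induction l with
  | nil => exact hβ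
  | cons i l ih => rw [wordProd_cons, LinearEquiv.mul_apply]; exact R.sRefl_mem ih i

lemma seqProd_mem {β : E} (hβ : β ∈ R.Φ) (l : List (Fin n)) : R.seqProd l β ∈ R.Φ :=
  R.wordProd_mem hβ l.reverse

lemma inner_wordProd_wordProd (l : List (Fin n)) (x y : E) :
    ⟪R.wordProd l x, R.wordProd l y⟫ = ⟪x, y⟫ := by
  induction l with
  | nil => rfl
  | cons i l ih => rw [wordProd_cons, LinearEquiv.mul_apply, LinearEquiv.mul_apply,
      inner_sRefl_sRefl, ih]

lemma rsPair_wordProd_wordProd (l : List (Fin n)) (x γ : E) :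
    rsPair (R.wordProd l x) (R.wordProd l γ) = rsPair x γ := by
  simp only [rsPair, inner_wordProd_wordProd]

lemma exists_split_of_wordProd_apply_not_mem (l : List (Fin n)) {γ : E}
    (hγ : γ ∈ R.posRoots) (h : R.wordProd l γ ∉ R.posRoots) :
    ∃ l₁ j l₂, l = l₁ ++ j :: l₂ ∧ R.wordProd l₂ γ = R.α j := by
  induction l with
  | nil => exact absurd hγ h
  | cons i l ih =>
    rw [wordProd_cons, LinearEquiv.mul_apply] at h
    by_cases hl : R.wordProd l γ ∈ R.posRoots
    · exact ⟨[], i, l, rfl, by_contra fun hne => h (R.sRefl_mem_posRoots hl hne)⟩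
    · obtain ⟨l₁, j, l₂, rfl, hj⟩ := ih hl
      exact ⟨i :: l₁, j, l₂, rfl, hj⟩

lemma sRefl_mul_wordProd_of_apply_alpha {m : List (Fin n)} {i j : Fin n}
    (h : R.wordProd m (R.α i) = R.α j) :
    R.sRefl j * R.wordProd m = R.wordProd m * R.sRefl i := by
  ext x
  simp only [LinearEquiv.mul_apply, sRefl_apply, map_sub, map_smul, ← h,
    rsPair_wordProd_wordProd]

/-- A Weyl group element preserving the positive roots is trivial: otherwise its last letter `s_i`
cancels against an earlier letter (the deletion condition), giving a shorter word. -/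
lemma wordProd_eq_one_of_mapsTo_posRoots (l : List (Fin n))
    (hl : ∀ γ ∈ R.posRoots, R.wordProd l γ ∈ R.posRoots) : R.wordProd l = 1 := by
  obtain ⟨N, hN⟩ : ∃ N, l.length ≤ N := ⟨_, le_rfl⟩
  induction N generalizing l with
  | zero => rw [List.length_eq_zero_iff.1 (Nat.le_zero.1 hN), wordProd_nil]
  | succ N ih =>
    rcases List.eq_nil_or_concat l with rfl | ⟨l', i, rfl⟩
    · rfl
    rw [List.concat_eq_append] at hN hl ⊢
    have hi : R.wordProd l' (R.α i) ∉ R.posRoots := by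
      have := hl _ (R.alpha_mem_posRoots i)
      rwa [wordProd_append, wordProd_singleton, LinearEquiv.mul_apply, sRefl_alpha, map_neg,
        R.neg_mem_posRoots_iff (R.wordProd_mem (R.α_mem i) l')] at this
    obtain ⟨l₁, j, l₂, rfl, hj⟩ :=
      R.exists_split_of_wordProd_apply_not_mem l' (R.alpha_mem_posRoots i) hi
    have hdel : R.wordProd (l₁ ++ j :: l₂ ++ [i]) = R.wordProd (l₁ ++ l₂) := by
      simp only [wordProd_append, wordProd_cons, wordProd_nil, mul_one, mul_assoc]
      rw [← mul_assoc (R.sRefl j), R.sRefl_mul_wordProd_of_apply_alpha hj, mul_assoc,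
        sRefl_mul_self, mul_one]
    rw [hdel] at hl ⊢
    exact ih _ hl (by simp at hN ⊢; omega)

def inversions (w : E ≃ₗ[ℝ] E) : Finset E := R.posRoots.filter fun γ => w γ ∉ R.posRoots

@[simp] lemma inversions_one : R.inversions 1 = ∅ :=
  Finset.filter_false_of_mem fun _ hγ => not_not.2 hγ

lemma wordProd_eq_of_inversions_eq {l l' : List (Fin n)}
    (h : R.inversions (R.wordProd l) = R.inversions (R.wordProd l')) :
    R.wordProd l = R.wordProd l' := by
  have hpos : ∀ γ ∈ R.posRoots, R.wordProd l γ ∈ R.posRoots ↔ R.wordProd l' γ ∈ R.posRoots := by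
    intro γ hγ
    exact not_iff_not.1 (by simpa [inversions, hγ] using congrArg (γ ∈ ·) h)
  have hroot : ∀ δ ∈ R.Φ, R.wordProd l δ ∈ R.posRoots → R.wordProd l' δ ∈ R.posRoots := by
    intro δ hδ hlδ
    by_cases hδ' : δ ∈ R.posRoots
    · exact (hpos δ hδ').1 hlδ
    · have := hpos _ ((R.neg_mem_posRoots_iff hδ).2 hδ')
      rw [map_neg, map_neg, R.neg_mem_posRoots_iff (R.wordProd_mem hδ _),
        R.neg_mem_posRoots_iff (R.wordProd_mem hδ _)] at this
      exact (not_iff_not.1 this).1 hlδ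
  have h1 : R.wordProd (l' ++ l.reverse) = 1 := by
    refine R.wordProd_eq_one_of_mapsTo_posRoots _ fun β hβ => ?_
    have hβ' : β = R.wordProd l (R.wordProd l.reverse β) := by
      rw [← R.wordProd_inv]
      exact ((R.wordProd l).apply_symm_apply β).symm
    rw [wordProd_append, LinearEquiv.mul_apply]
    exact hroot _ (R.wordProd_mem (R.mem_Φ_of_mem_posRoots hβ) _) (hβ' ▸ hβ)
  rw [wordProd_append, ← wordProd_inv, mul_inv_eq_one] at h1
  exact h1.symm

lemma inversions_sRefl_mul {u : E ≃ₗ[ℝ] E} (hu : ∀ β ∈ R.Φ, u β ∈ R.Φ) {v : Fin n} {γ₁ : E}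
    (hγ₁ : γ₁ ∈ R.posRoots) (huγ₁ : u γ₁ = R.α v) :
    R.inversions (R.sRefl v * u) = insert γ₁ (R.inversions u) := by
  ext γ
  rw [Finset.mem_insert, inversions, inversions, Finset.mem_filter, Finset.mem_filter,
    LinearEquiv.mul_apply]
  by_cases hγ : γ = γ₁
  · subst hγ
    simp only [huγ₁, sRefl_alpha, true_or, iff_true]
    exact ⟨hγ₁, fun h => (R.neg_mem_posRoots_iff (R.α_mem v)).1 h (R.alpha_mem_posRoots v)⟩
  rw [or_iff_right hγ]
  refine and_congr_right fun hγpos => not_congr (R.sRefl_mem_posRoots_iff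
    (hu γ (R.mem_Φ_of_mem_posRoots hγpos)) ?_ ?_)
  · exact fun h => hγ (u.injective (h.trans huγ₁.symm))
  · intro h
    have : γ = -γ₁ := u.injective (by rw [h, map_neg, huγ₁])
    rw [this, R.neg_mem_posRoots_iff (R.mem_Φ_of_mem_posRoots hγ₁)] at hγpos
    exact hγpos hγ₁

lemma rsCoroot_wordProd (l : List (Fin n)) (x : E) :
    rsCoroot (R.wordProd l x) = R.wordProd l (rsCoroot x) := by
  rw [rsCoroot, rsCoroot, inner_wordProd_wordProd, map_smul]

lemma sRefl_rsCoroot_alpha (i j : Fin n) :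
    R.sRefl i (rsCoroot (R.α j)) =
      rsCoroot (R.α j) - rsPair (R.α i) (R.α j) • rsCoroot (R.α i) := by
  have hi := (R.inner_self_pos (R.α_mem i)).ne'
  have hj := (R.inner_self_pos (R.α_mem j)).ne'
  rw [R.sRefl_apply, rsCoroot, rsCoroot, smul_smul]
  congr 2
  simp only [rsPair, real_inner_smul_right, real_inner_comm (R.α i)]
  field_simp

def corootLattice : Submodule ℤ E := Submodule.span ℤ (Set.range fun j => rsCoroot (R.α j))

lemma sRefl_mem_corootLattice (i : Fin n) {x : E} (hx : x ∈ R.corootLattice) :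
    R.sRefl i x ∈ R.corootLattice := by
  induction hx using Submodule.span_induction with
  | mem y hy =>
    obtain ⟨j, rfl⟩ := hy
    obtain ⟨k, hk⟩ := R.crystallographic _ (R.α_mem i) _ (R.α_mem j)
    rw [sRefl_rsCoroot_alpha, hk, Int.cast_smul_eq_zsmul]
    exact sub_mem (Submodule.subset_span ⟨j, rfl⟩)
      (Submodule.smul_mem _ k (Submodule.subset_span ⟨i, rfl⟩))
  | zero => simp
  | add y z _ _ hy hz => simpa using add_mem hy hz
  | smul k y _ hy => simpa using Submodule.smul_mem _ k hy

lemma wordProd_mem_corootLattice (l : List (Fin n)) {x : E} (hx : x ∈ R.corootLattice) :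
    R.wordProd l x ∈ R.corootLattice := by
  induction l with
  | nil => exact hx
  | cons i l ih => rw [wordProd_cons, LinearEquiv.mul_apply]; exact R.sRefl_mem_corootLattice i ih

lemma exists_pos_rsPair_alpha {γ : E} (hγ : γ ∈ R.posRoots) : ∃ i, 0 < rsPair γ (R.α i) := by
  obtain ⟨hγΦ, c, hc, hc_nonneg⟩ := Finset.mem_filter.1 hγ
  by_contra! h
  have hγγ : ⟪γ, γ⟫ ≤ 0 := by
    conv_lhs => enter [2]; rw [hc]
    rw [sum_inner]
    refine Finset.sum_nonpos fun i _ => ?_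
    rw [real_inner_smul_left, real_inner_comm]
    exact mul_nonpos_of_nonneg_of_nonpos (by exact_mod_cast hc_nonneg i)
      (not_lt.1 fun hpos => (h i).not_gt ((R.rsPair_pos_iff (R.α_mem i) γ).2 hpos))
  linarith [R.inner_self_pos hγΦ]

/-- Every positive root is `W`-conjugate to a simple root: by induction on the height, a simple
reflection `s_i` with `⟨γ, α_i^∨⟩ > 0` lowers the height of a non-simple positive root `γ`. -/
lemma exists_wordProd_alpha_eq {γ : E} (hγ : γ ∈ R.posRoots) :
    ∃ l i, R.wordProd l (R.α i) = γ := by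
  obtain ⟨ρ, hρ⟩ := R.exists_inner_alpha_eq 1
  obtain ⟨N, hN⟩ : ∃ N : ℕ, ⟪γ, ρ⟫ ≤ N := exists_nat_ge _
  induction N generalizing γ with
  | zero => push_cast at hN; linarith [R.one_le_inner_of_mem_posRoots hρ hγ]
  | succ N ih =>
    by_cases hsimple : ∃ i, γ = R.α i
    · obtain ⟨i, rfl⟩ := hsimple
      exact ⟨[], i, rfl⟩
    push Not at hsimple
    obtain ⟨i, hi⟩ := R.exists_pos_rsPair_alpha hγ
    obtain ⟨m, hm⟩ := R.crystallographic _ (R.mem_Φ_of_mem_posRoots hγ) _ (R.α_mem i)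
    have hm1 : (1 : ℝ) ≤ m := by
      rw [hm] at hi
      exact_mod_cast (Int.cast_pos.1 hi : 0 < m)
    obtain ⟨l, j, hl⟩ := ih (R.sRefl_mem_posRoots hγ (hsimple i)) (by
      rw [R.sRefl_apply, inner_sub_left, real_inner_smul_left, hρ, hm]
      push_cast at hN
      simp only [Pi.one_apply]
      linarith)
    refine ⟨i :: l, j, ?_⟩
    rw [wordProd_cons, LinearEquiv.mul_apply, hl, ← LinearEquiv.mul_apply, sRefl_mul_self,
      LinearEquiv.coe_one, id]

lemma rsCoroot_mem_corootLattice {γ : E} (hγ : γ ∈ R.posRoots) :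
    rsCoroot γ ∈ R.corootLattice := by
  obtain ⟨l, i, rfl⟩ := R.exists_wordProd_alpha_eq hγ
  rw [rsCoroot_wordProd]
  exact R.wordProd_mem_corootLattice l (Submodule.subset_span ⟨i, rfl⟩)

lemma rsCoroot_eq_sum_corootCoeffs {γ : E} (hγ : γ ∈ R.posRoots) :
    rsCoroot γ = ∑ j, (R.corootCoeffs (rsCoroot γ) j : ℝ) • rsCoroot (R.α j) := by
  have hex : ∃ k : Fin n → ℤ, rsCoroot γ = ∑ j, (k j : ℝ) • rsCoroot (R.α j) := by
    obtain ⟨k, hk⟩ := (Submodule.mem_span_range_iff_exists_fun ℤ).1 (R.rsCoroot_mem_corootLattice hγ)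
    exact ⟨k, by simp only [← hk, Int.cast_smul_eq_zsmul]⟩
  rw [corootCoeffs, dif_pos hex]
  exact hex.choose_spec

lemma rsPair_nonneg_of_dominant {x : E} (hx : ∀ i, 0 ≤ rsPair x (R.α i)) {γ : E}
    (hγ : γ ∈ R.posRoots) : 0 ≤ rsPair x γ := by
  obtain ⟨hγΦ, c, hc, hc_nonneg⟩ := Finset.mem_filter.1 hγ
  rw [R.rsPair_nonneg_iff hγΦ, hc, inner_sum]
  refine Finset.sum_nonneg fun i _ => ?_
  rw [real_inner_smul_right]
  exact mul_nonneg (by exact_mod_cast hc_nonneg i) ((R.rsPair_nonneg_iff (R.α_mem i) x).1 (hx i))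

/-- `lam = ∑_{i ∈ I} ω_i` is the sum of the fundamental weights indexed by `I`. -/
def IsFundWeightSum (I : Finset (Fin n)) (lam : E) : Prop :=
  ∀ j, rsPair lam (R.α j) = if j ∈ I then 1 else 0

lemma exists_isFundWeightSum (I : Finset (Fin n)) : ∃ lam, R.IsFundWeightSum I lam := by
  obtain ⟨lam, hlam⟩ :=
    R.exists_inner_alpha_eq fun j => (if j ∈ I then 1 else 0) * ⟪R.α j, R.α j⟫ / 2
  refine ⟨lam, fun j => ?_⟩
  have := (R.inner_self_pos (R.α_mem j)).ne'
  rw [rsPair, real_inner_comm, hlam]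
  field_simp

namespace IsFundWeightSum

variable {R : RootSystemBase n d} {I : Finset (Fin n)} {lam : EuclideanSpace ℝ (Fin d)}

lemma dominant (hlam : R.IsFundWeightSum I lam) (i : Fin n) : 0 ≤ rsPair lam (R.α i) := by
  rw [hlam i]; split_ifs <;> norm_num

lemma htI_eq (hlam : R.IsFundWeightSum I lam) {γ : E} (hγ : γ ∈ R.posRoots) :
    (R.htI I (rsCoroot γ) : ℝ) = rsPair lam γ := by
  rw [rsPair_eq_inner_rsCoroot, htI, Int.cast_sum]
  conv_rhs => rw [R.rsCoroot_eq_sum_corootCoeffs hγ]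
  have hlam' : ∀ j, rsPair lam (R.α j) = if j ∈ I then 1 else 0 := hlam
  simp only [inner_sum, real_inner_smul_right, ← rsPair_eq_inner_rsCoroot, hlam', mul_ite,
    mul_one, mul_zero]
  rw [Finset.sum_ite_mem, Finset.univ_inter]

lemma rsPair_eq_zero (hlam : R.IsFundWeightSum I lam) {γ : E}
    (hγ : rsCoroot γ ∈ Submodule.span ℝ ((fun j => rsCoroot (R.α j)) '' {j | j ∉ I})) :
    rsPair lam γ = 0 := by
  have hle : Submodule.span ℝ ((fun j => rsCoroot (R.α j)) '' {j | j ∉ I}) ≤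
      LinearMap.ker (innerₛₗ ℝ lam) := by
    refine Submodule.span_le.2 ?_
    rintro _ ⟨j, hj, rfl⟩
    rw [SetLike.mem_coe, LinearMap.mem_ker, innerₛₗ_apply_apply, ← rsPair_eq_inner_rsCoroot,
      hlam j, if_neg hj]
  rw [rsPair_eq_inner_rsCoroot]
  exact hle hγ

end IsFundWeightSum

lemma validFrom_append_singleton (I : Finset (Fin n)) (l : List (Fin n)) (c : Fin n → ℤ)
    (v : Fin n) :
    R.ValidFrom I c (l ++ [v]) ↔ R.ValidFrom I c l ∧ R.Sad I (l.foldl (R.fire I) c) v := by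
  induction l generalizing c with
  | nil => simp [ValidFrom]
  | cons i l ih => simp only [List.cons_append, ValidFrom, ih, List.foldl_cons, and_assoc]

lemma valid_append_singleton (I : Finset (Fin n)) (l : List (Fin n)) (v : Fin n) :
    R.Valid I (l ++ [v]) ↔ R.Valid I l ∧ R.Sad I (R.play I l) v :=
  R.validFrom_append_singleton I l 0 v

lemma play_append_singleton (I : Finset (Fin n)) (l : List (Fin n)) (v : Fin n) :
    R.play I (l ++ [v]) = R.fire I (R.play I l) v := by
  rw [play, List.foldl_append]; rfl

lemma fire_eq_add_single (I : Finset (Fin n)) (c : Fin n → ℤ) (v : Fin n) :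
    R.fire I c v = c + Pi.single v (R.chipBound I c v - 2 * c v) := by
  ext u
  by_cases hu : u = v
  · subst hu
    rw [fire, Function.update_self, Pi.add_apply, Pi.single_eq_same]
    ring
  · simp [fire, hu]

lemma cartan_cast (u v : Fin n) : (R.cartan u v : ℝ) = rsPair (R.α u) (R.α v) := by
  obtain ⟨k, hk⟩ := R.crystallographic _ (R.α_mem u) _ (R.α_mem v)
  rw [cartan, hk, Int.floor_intCast]

lemma cartan_self (v : Fin n) : R.cartan v v = 2 := by
  rw [cartan, R.rsPair_self (R.α_mem v), Int.floor_ofNat]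

namespace IsFundWeightSum

variable {R : RootSystemBase n d} {I : Finset (Fin n)} {lam : EuclideanSpace ℝ (Fin d)}

/-- The configuration `c` is read as the weight `lam - ∑ c_u α_u`; the firing rule is then the
reflection `s_v` of that weight. -/
lemma chipBound_sub (hlam : R.IsFundWeightSum I lam) (c : Fin n → ℤ) (v : Fin n) :
    ((R.chipBound I c v - 2 * c v : ℤ) : ℝ) = rsPair (lam - ∑ u, (c u : ℝ) • R.α u) (R.α v) := by
  have hsum : ∑ u ∈ Finset.univ.erase v, -(R.cartan u v) * c u =
      -∑ u, R.cartan u v * c u + 2 * c v := by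
    rw [← Finset.sum_erase_add _ _ (Finset.mem_univ v), R.cartan_self]
    simp only [neg_mul, Finset.sum_neg_distrib]
    ring
  have hlin : rsPair (lam - ∑ u, (c u : ℝ) • R.α u) (R.α v) =
      rsPair lam (R.α v) - ∑ u, rsPair (R.α u) (R.α v) * c u := by
    change corootForm (R.α v) _ = corootForm (R.α v) lam - ∑ u, corootForm (R.α v) (R.α u) * _
    simp only [map_sub, map_sum, map_smul, smul_eq_mul, mul_comm]
  simp only [hlin, hlam v, ← R.cartan_cast, chipBound, hsum]
  push_cast
  ring

lemma sad_iff (hlam : R.IsFundWeightSum I lam) (c : Fin n → ℤ) (v : Fin n) :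
    R.Sad I c v ↔ 0 < rsPair (lam - ∑ u, (c u : ℝ) • R.α u) (R.α v) := by
  rw [Sad, ← hlam.chipBound_sub, Int.cast_pos, sub_pos]

end IsFundWeightSum

structure GameInvariant (I : Finset (Fin n)) (lam : E) (l : List (Fin n)) : Prop where
  config : ∑ u, (R.play I l u : ℝ) • R.α u = lam - R.seqProd l lam
  card_inversions : (R.inversions (R.seqProd l)).card = l.length
  rsPair_pos : ∀ γ ∈ R.inversions (R.seqProd l), 0 < rsPair lam γ
  sum_play : ((∑ u, R.play I l u : ℤ) : ℝ) = ∑ γ ∈ R.inversions (R.seqProd l), rsPair lam γ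

namespace GameInvariant

variable {R : RootSystemBase n d} {I : Finset (Fin n)} {lam : EuclideanSpace ℝ (Fin d)}
  {l : List (Fin n)}

lemma nil : R.GameInvariant I lam [] where
  config := by simp [play]
  card_inversions := by simp
  rsPair_pos := by simp
  sum_play := by simp [play]

lemma append_singleton (hlam : R.IsFundWeightSum I lam) {v : Fin n}
    (h : R.GameInvariant I lam l) (hsad : R.Sad I (R.play I l) v) :
    R.GameInvariant I lam (l ++ [v]) := by
  set w := R.seqProd l
  set δ := R.chipBound I (R.play I l) v - 2 * R.play I l v
  have hδ : (δ : ℝ) = rsPair (w lam) (R.α v) := by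
    rw [hlam.chipBound_sub, h.config, sub_sub_cancel]
  have hδpos : (0 : ℝ) < δ := by rwa [hlam.sad_iff, h.config, sub_sub_cancel, ← hδ] at hsad
  -- the inversion added by the firing
  set γ₁ := R.wordProd l (R.α v)
  have hwγ₁ : w γ₁ = R.α v := R.seqProd_wordProd_apply l _
  have hγ₁ : rsPair lam γ₁ = δ := by
    rw [hδ, ← hwγ₁]
    exact (R.rsPair_wordProd_wordProd l.reverse lam γ₁).symm
  have hγ₁pos : γ₁ ∈ R.posRoots := by
    by_contra hneg
    have hnonneg := R.rsPair_nonneg_of_dominant hlam.dominant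
      ((R.neg_mem_posRoots_iff (R.wordProd_mem (R.α_mem v) l)).2 hneg)
    rw [rsPair_neg_right, hγ₁] at hnonneg
    linarith
  have hinv : R.inversions (R.seqProd (l ++ [v])) = insert γ₁ (R.inversions w) := by
    rw [seqProd_append_singleton]
    exact R.inversions_sRefl_mul (fun β hβ => R.seqProd_mem hβ l) hγ₁pos hwγ₁
  have hnot : γ₁ ∉ R.inversions w := fun hmem =>
    (Finset.mem_filter.1 hmem).2 (hwγ₁ ▸ R.alpha_mem_posRoots v)
  have hplay : R.play I (l ++ [v]) = R.play I l + Pi.single v δ := by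
    rw [play_append_singleton, fire_eq_add_single]
  refine ⟨?_, ?_, ?_, ?_⟩
  · rw [hplay, seqProd_append_singleton, LinearEquiv.mul_apply, sRefl_apply, ← hδ,
      sub_sub_eq_add_sub, add_sub_right_comm, ← h.config]
    simp [add_smul, Finset.sum_add_distrib, Pi.single_apply, ite_smul]
  · rw [hinv, Finset.card_insert_of_notMem hnot, h.card_inversions, List.length_append,
      List.length_singleton]
  · rw [hinv]
    intro γ hγ
    rcases Finset.mem_insert.1 hγ with rfl | hγ
    · rwa [hγ₁]
    · exact h.rsPair_pos γ hγ
  · rw [hinv, Finset.sum_insert hnot, hγ₁, ← h.sum_play, hplay]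
    simp [Finset.sum_add_distrib, add_comm]

lemma of_valid (hlam : R.IsFundWeightSum I lam) (hl : R.Valid I l) :
    R.GameInvariant I lam l := by
  induction l using List.reverseRecOn with
  | nil => exact nil
  | append_singleton l v ih =>
    obtain ⟨hl, hsad⟩ := (R.valid_append_singleton I l v).1 hl
    exact (ih hl).append_singleton hlam hsad

lemma length_le (h : R.GameInvariant I lam l) : l.length ≤ R.posRoots.card :=
  h.card_inversions ▸ Finset.card_filter_le _ _

end GameInvariant

lemma exists_maximalSeq (I : Finset (Fin n)) {N : ℕ} (hN : ∀ l, R.Valid I l → l.length ≤ N) :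
    ∃ l, R.MaximalSeq I l := by
  by_contra! hmax
  have hlong : ∀ k, ∃ l, R.Valid I l ∧ l.length = k := by
    intro k
    induction k with
    | zero => exact ⟨[], trivial, rfl⟩
    | succ k ih =>
      obtain ⟨l, hl, rfl⟩ := ih
      obtain ⟨v, hv⟩ : ∃ v, R.Sad I (R.play I l) v := by
        simpa [MaximalSeq, hl] using hmax l
      exact ⟨l ++ [v], (R.valid_append_singleton I l v).2 ⟨hl, hv⟩, by simp⟩
  obtain ⟨l, hl, hlen⟩ := hlong (N + 1)
  have hle := hN l hl
  omega

namespace IsFundWeightSum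

variable {R : RootSystemBase n d} {I : Finset (Fin n)} {lam : EuclideanSpace ℝ (Fin d)}
  {l l' : List (Fin n)}

/-- At the end of the game `w lam` is antidominant, so `w` inverts every positive root `γ` with
`⟨lam, γ^∨⟩ > 0`; the game never inverts any other root. -/
lemma inversions_eq_of_maximalSeq (hlam : R.IsFundWeightSum I lam) (hl : R.MaximalSeq I l) :
    R.inversions (R.seqProd l) = R.posRoots.filter fun γ => 0 < rsPair lam γ := by
  have hinv := GameInvariant.of_valid hlam hl.1
  ext γ
  refine ⟨fun hγ => Finset.mem_filter.2 ⟨(Finset.mem_filter.1 hγ).1, hinv.rsPair_pos γ hγ⟩,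
    fun hγ => ?_⟩
  obtain ⟨hγpos, hγlam⟩ := Finset.mem_filter.1 hγ
  refine Finset.mem_filter.2 ⟨hγpos, fun hwγ => ?_⟩
  have hanti : ∀ v, 0 ≤ rsPair (-R.seqProd l lam) (R.α v) := fun v => by
    have hv := hl.2 v
    rw [hlam.sad_iff, hinv.config, sub_sub_cancel, not_lt] at hv
    rw [rsPair_neg_left]
    linarith
  have hle := R.rsPair_nonneg_of_dominant hanti hwγ
  rw [rsPair_neg_left, seqProd_eq_wordProd, rsPair_wordProd_wordProd] at hle
  linarith

lemma play_eq_of_maximalSeq (hlam : R.IsFundWeightSum I lam) (hl : R.MaximalSeq I l)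
    (hl' : R.MaximalSeq I l') : R.play I l = R.play I l' := by
  have hw : R.seqProd l = R.seqProd l' := R.wordProd_eq_of_inversions_eq
    ((hlam.inversions_eq_of_maximalSeq hl).trans (hlam.inversions_eq_of_maximalSeq hl').symm)
  have hcoeff := R.coeffs_unique <| ((GameInvariant.of_valid hlam hl.1).config.trans
    (hw ▸ (GameInvariant.of_valid hlam hl'.1).config.symm))
  funext u
  exact_mod_cast congrFun hcoeff u

lemma sum_play_of_maximalSeq (hlam : R.IsFundWeightSum I lam) (hl : R.MaximalSeq I l) :
    ∑ v, R.play I l v = ∑ γ ∈ R.posRoots.filter (fun γ => rsCoroot γ ∉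
        Submodule.span ℝ ((fun j => rsCoroot (R.α j)) '' {j : Fin n | j ∉ I})),
      R.htI I (rsCoroot γ) := by
  have hpos : ∀ γ ∈ R.posRoots, rsPair lam γ ≠ 0 → 0 < rsPair lam γ := fun γ hγ hne =>
    lt_of_le_of_ne (R.rsPair_nonneg_of_dominant hlam.dominant hγ) hne.symm
  have hspan : ∀ γ ∈ R.posRoots, rsPair lam γ ≠ 0 → rsCoroot γ ∉
      Submodule.span ℝ ((fun j => rsCoroot (R.α j)) '' {j : Fin n | j ∉ I}) :=
    fun γ _ hne hmem => hne (hlam.rsPair_eq_zero hmem)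
  have hcast : ((∑ v, R.play I l v : ℤ) : ℝ) = ((∑ γ ∈ R.posRoots.filter (fun γ => rsCoroot γ ∉
      Submodule.span ℝ ((fun j => rsCoroot (R.α j)) '' {j : Fin n | j ∉ I})),
        R.htI I (rsCoroot γ) : ℤ) : ℝ) := by
    rw [(GameInvariant.of_valid hlam hl.1).sum_play, hlam.inversions_eq_of_maximalSeq hl,
      Finset.sum_filter_of_ne hpos, ← Finset.sum_filter_of_ne hspan, Int.cast_sum]
    exact Finset.sum_congr rfl fun γ hγ => (hlam.htI_eq (Finset.mem_filter.1 hγ).1).symm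
  exact_mod_cast hcast

end IsFundWeightSum

end RootSystemBase

/-- Root counting identity. The Modified Kostant Game with active set `I`
terminates in a unique final configuration, and the total number of chips of this final
configuration equals the sum of the `I`-heights of all positive coroots not lying in the
coroot subsystem generated by `{α_j^∨ : j ∉ I}`. -/
theorem statement4 {n d : ℕ} (R : RootSystemBase n d) (I : Finset (Fin n)) :
    (∃ N : ℕ, ∀ l : List (Fin n), R.Valid I l → l.length ≤ N) ∧
    ∃ cfin : Fin n → ℤ,
      (∃ l : List (Fin n), R.MaximalSeq I l) ∧
      (∀ l : List (Fin n), R.MaximalSeq I l → R.play I l = cfin) ∧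
      ∑ v, cfin v =
        ∑ γ ∈ R.posRoots.filter (fun γ => rsCoroot γ ∉
            Submodule.span ℝ ((fun j => rsCoroot (R.α j)) '' {j : Fin n | j ∉ I})),
          R.htI I (rsCoroot γ) := by
  obtain ⟨lam, hlam⟩ := R.exists_isFundWeightSum I
  have hbound : ∀ l, R.Valid I l → l.length ≤ R.posRoots.card := fun l hl =>
    (RootSystemBase.GameInvariant.of_valid hlam hl).length_le
  obtain ⟨l₀, hl₀⟩ := R.exists_maximalSeq I hbound
  exact ⟨⟨_, hbound⟩, R.play I l₀, ⟨l₀, hl₀⟩, fun l hl => hlam.play_eq_of_maximalSeq hl hl₀,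
    hlam.sum_play_of_maximalSeq hl₀⟩
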